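/- Let 𝒱 be a finite index set with distributions {P_v}_{v∈𝒱} on a finite set X, V uniform on 𝒱, and U the uniform mixture. Suppose that for every (ε,δ)-differentially private single-input randomized map M : X → R we have I(M(P_V); V) ≤ I₀. If M is an online algorithm on streams of length n such that for every t and every pair of neighboring streams the joint distribution of (internal state at time t, final output) satisfies (ε,δ)-differential privacy (pan-privacy), then dTV(M(P_V^n), M(U^n)) ≤ n·√(I₀/2). -/

import Mathlib

open Finset

def IsDist {α : Type*} [Fintype α] (p : α → ℝ) : Prop :=
  (∀ x, 0 ≤ p x) ∧ ∑ x, p x = 1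

noncomputable def dTV {α : Type*} [Fintype α] (p q : α → ℝ) : ℝ :=
  (1 / 2) * ∑ x, |p x - q x|

def IsDP {X R : Type*} [Fintype X] [Fintype R] (M : X → R → ℝ) (ε δ : ℝ) : Prop :=
  ∀ x x' : X, ∀ C : Finset R, ∑ r ∈ C, M x r ≤ Real.exp ε * ∑ r ∈ C, M x' r + δ

noncomputable def mutualInfo {α β : Type*} [Fintype α] [Fintype β]
    (j : α × β → ℝ) : ℝ :=
  ∑ p : α × β,
    if j p = 0 then 0
    else j p * Real.log (j p / ((∑ b, j (p.1, b)) * (∑ a, j (a, p.2))))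

/-- State distribution of the online algorithm after step `i` on independent inputs
with the `j`-th input drawn from `q j`. -/
noncomputable def stateDist {X S : Type*} [Fintype X] [Fintype S]
    (M1 : X → S → ℝ) (Mst : ℕ → S → X → S → ℝ) (q : ℕ → X → ℝ) : ℕ → S → ℝ
  | 0 => fun s => ∑ x, q 0 x * M1 x s
  | (i + 1) => fun s =>
      ∑ s', stateDist M1 Mst q i s' * ∑ x, q (i + 1) x * Mst (i + 1) s' x s

/-- State distribution on a fixed (deterministic) stream `x`. -/
noncomputable def detState {X S : Type*} [Fintype S]
    (M1 : X → S → ℝ) (Mst : ℕ → S → X → S → ℝ) (x : ℕ → X) : ℕ → S → ℝ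
  | 0 => M1 (x 0)
  | (i + 1) => fun s => ∑ s', detState M1 Mst x i s' * Mst (i + 1) s' (x (i + 1)) s

/-- Distribution of the state `j` steps after time `t`, started from state `s0`,
on the fixed stream `x`. -/
noncomputable def fwd {X S : Type*} [Fintype S] [DecidableEq S]
    (Mst : ℕ → S → X → S → ℝ) (x : ℕ → X) (t : ℕ) (s0 : S) : ℕ → S → ℝ
  | 0 => fun s => if s = s0 then 1 else 0
  | (j + 1) => fun s =>
      ∑ s', fwd Mst x t s0 j s' * Mst (t + j + 1) s' (x (t + j + 1)) s

/-- The adversary's view on stream `x` with intrusion at time `t` (for streams of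
length `n`): the joint distribution of the internal state at time `t` and the final
output. -/
noncomputable def view {X S O : Type*} [Fintype S] [DecidableEq S] [Fintype O]
    (M1 : X → S → ℝ) (Mst : ℕ → S → X → S → ℝ) (Mout : S → O → ℝ)
    (n : ℕ) (x : ℕ → X) (t : ℕ) : S × O → ℝ :=
  fun p => detState M1 Mst x t p.1 *
    ∑ sf, fwd Mst x t p.1 (n - 1 - t) sf * Mout sf p.2

/-- Pan-privacy of an online algorithm on streams of length `n`: for every intrusion
time and every pair of neighboring streams, the joint distribution of (state at the
intrusion time, final output) is `(ε,δ)`-indistinguishable. -/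
def PanPrivate {X S O : Type} [Fintype S] [DecidableEq S] [Fintype O]
    (M1 : X → S → ℝ) (Mst : ℕ → S → X → S → ℝ) (Mout : S → O → ℝ)
    (n : ℕ) (ε δ : ℝ) : Prop :=
  ∀ t < n, ∀ x x' : ℕ → X, (∃ i0 : ℕ, ∀ i, i ≠ i0 → x i = x' i) →
    ∀ C : Finset (S × O),
      ∑ p ∈ C, view M1 Mst Mout n x t p ≤
        Real.exp ε * ∑ p ∈ C, view M1 Mst Mout n x' t p + δ

/-!
Hybrid argument. Let `H t` be the output law when the first `t` inputs are drawn from `U` and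
the others from `P_V`, so that `H 0 = M(P_V^n)` and `H n = M(U^n)`. Only the law of input `t`
changes between `H t` and `H (t + 1)`, and for each `v` the output is the same post-processing
of the state at time `t`. So `dTV(H t, H (t + 1))` is at most the average over `v` of the
distance between the laws of that state under `X_t ∼ P_v` and `X_t ∼ U`, which is the distance
between the joint law of (state, `V`) and the product of its marginals; by Pinsker's inequality
it is at most `√(I / 2)`, `I` being the mutual information of `V` with the output of the
single-input mechanism `x ↦ s_t` (earlier inputs from `U`) on `P_V`. Pan-privacy makes that
mechanism `(ε, δ)`-DP, since it is a mixture over the earlier inputs of the DP maps given by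
fixed streams; hence `I ≤ I₀`, and summing over `t < n` gives the bound.
-/

noncomputable def relEntropy {α : Type*} [Fintype α] (p q : α → ℝ) : ℝ :=
  ∑ x, if p x = 0 then 0 else p x * Real.log (p x / q x)

lemma mutualInfo_eq_relEntropy {α β : Type*} [Fintype α] [Fintype β] (j : α × β → ℝ) :
    mutualInfo j = relEntropy j (fun p => (∑ b, j (p.1, b)) * (∑ a, j (a, p.2))) :=
  rfl

lemma hasDerivAt_log_sub_div {x : ℝ} (hx : 0 < x) :
    HasDerivAt (fun x => Real.log x - 3 * (x - 1) * (x + 5) / (2 * (x + 2) ^ 2))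
      ((x - 1) ^ 2 * (x + 8) / (x * (x + 2) ^ 3)) x := by
  have hnum : HasDerivAt (fun x : ℝ => 3 * (x - 1) * (x + 5)) (3 * (x + 5) + 3 * (x - 1)) x :=
    ((((hasDerivAt_id' x).sub_const 1).const_mul 3).mul
      ((hasDerivAt_id' x).add_const 5)).congr_deriv (by ring)
  have hden : HasDerivAt (fun x : ℝ => 2 * (x + 2) ^ 2) (2 * (2 * (x + 2))) x :=
    ((((hasDerivAt_id' x).add_const 2).pow 2).const_mul 2).congr_deriv (by ring)
  refine ((Real.hasDerivAt_log hx.ne').sub (hnum.div hden (by positivity))).congr_deriv ?_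
  field_simp
  ring

lemma monotoneOn_log_sub_div :
    MonotoneOn (fun x => Real.log x - 3 * (x - 1) * (x + 5) / (2 * (x + 2) ^ 2)) (Set.Ioi 0) := by
  refine monotoneOn_of_hasDerivWithinAt_nonneg (convex_Ioi 0)
    (fun x hx => (hasDerivAt_log_sub_div hx).continuousAt.continuousWithinAt)
    (fun x hx => (hasDerivAt_log_sub_div (interior_subset hx)).hasDerivWithinAt) ?_
  intro x hx
  have hx : 0 < x := interior_subset hx
  positivity

lemma hasDerivAt_mul_log_sub_div {t : ℝ} (ht : 0 < t) :
    HasDerivAt (fun t => t * Real.log t - t + 1 - 3 * (t - 1) ^ 2 / (2 * t + 4))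
      (Real.log t - 3 * (t - 1) * (t + 5) / (2 * (t + 2) ^ 2)) t := by
  have hmul : HasDerivAt (fun t : ℝ => t * Real.log t) (Real.log t + 1) t :=
    ((hasDerivAt_id' t).mul (Real.hasDerivAt_log ht.ne')).congr_deriv (by field_simp)
  have hnum : HasDerivAt (fun t : ℝ => 3 * (t - 1) ^ 2) (3 * (2 * (t - 1))) t :=
    ((((hasDerivAt_id' t).sub_const 1).pow 2).const_mul 3).congr_deriv (by ring)
  have hden : HasDerivAt (fun t : ℝ => 2 * t + 4) 2 t :=
    (((hasDerivAt_id' t).const_mul 2).add_const 4).congr_deriv (by ring)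
  refine (((hmul.sub (hasDerivAt_id' t)).add_const 1).sub
    (hnum.div hden (by positivity))).congr_deriv ?_
  field_simp
  ring

/-- The pointwise inequality behind Pinsker's inequality. -/
lemma three_mul_sq_div_le_mul_log {t : ℝ} (ht : 0 < t) :
    3 * (t - 1) ^ 2 / (2 * t + 4) ≤ t * Real.log t - t + 1 := by
  set g := fun t : ℝ => t * Real.log t - t + 1 - 3 * (t - 1) ^ 2 / (2 * t + 4)
  set g' := fun x : ℝ => Real.log x - 3 * (x - 1) * (x + 5) / (2 * (x + 2) ^ 2)
  have hg1 : g 1 = 0 := by norm_num [g]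
  have hg'1 : g' 1 = 0 := by norm_num [g']
  suffices 0 ≤ g t by simp only [g] at this; linarith
  rcases le_total 1 t with h1t | ht1
  · have hmono : MonotoneOn g (Set.Ici 1) :=
      monotoneOn_of_hasDerivWithinAt_nonneg (convex_Ici 1)
        (fun x hx => (hasDerivAt_mul_log_sub_div
          (one_pos.trans_le hx)).continuousAt.continuousWithinAt)
        (fun x hx => (hasDerivAt_mul_log_sub_div
          (one_pos.trans_le (interior_subset hx))).hasDerivWithinAt)
        (fun x hx => hg'1 ▸ monotoneOn_log_sub_div (Set.mem_Ioi.2 one_pos)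
          (one_pos.trans_le (interior_subset hx)) (interior_subset hx))
    exact hg1 ▸ hmono Set.self_mem_Ici h1t h1t
  · have hanti : AntitoneOn g (Set.Icc t 1) :=
      antitoneOn_of_hasDerivWithinAt_nonpos (convex_Icc t 1)
        (fun x hx => (hasDerivAt_mul_log_sub_div
          (ht.trans_le hx.1)).continuousAt.continuousWithinAt)
        (fun x hx => (hasDerivAt_mul_log_sub_div
          (ht.trans_le (interior_subset hx).1)).hasDerivWithinAt)
        (fun x hx => hg'1 ▸ monotoneOn_log_sub_div (ht.trans_le (interior_subset hx).1)
          (Set.mem_Ioi.2 one_pos) (interior_subset hx).2)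
    exact hg1 ▸ hanti ⟨le_rfl, ht1⟩ ⟨ht1, le_rfl⟩ ht1

lemma sub_add_three_mul_sq_div_le {x y : ℝ} (hx : 0 ≤ x) (hy : 0 ≤ y) (hxy : y = 0 → x = 0) :
    x - y + 3 * (x - y) ^ 2 / (2 * x + 4 * y) ≤
      if x = 0 then 0 else x * Real.log (x / y) := by
  rcases hx.eq_or_lt with rfl | hx
  · rcases hy.eq_or_lt with rfl | hy
    · norm_num
    · rw [if_pos rfl, show 3 * (0 - y) ^ 2 / (2 * 0 + 4 * y) = 3 * y / 4 by field_simp; ring]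
      linarith
  have hy : 0 < y := hy.lt_of_ne fun h => hx.ne' (hxy h.symm)
  obtain ⟨t, ht, rfl⟩ : ∃ t, 0 < t ∧ x = y * t := ⟨x / y, div_pos hx hy, by field_simp⟩
  have key := mul_le_mul_of_nonneg_left (three_mul_sq_div_le_mul_log ht) hy.le
  have hquad : 3 * (y * t - y) ^ 2 / (2 * (y * t) + 4 * y) =
      y * (3 * (t - 1) ^ 2 / (2 * t + 4)) := by
    field_simp
  rw [if_neg hx.ne', mul_div_cancel_left₀ t hy.ne', hquad]
  linarith

lemma three_mul_sum_sq_div_le_relEntropy {α : Type*} [Fintype α] {p q : α → ℝ}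
    (hp : IsDist p) (hq : IsDist q) (hpq : ∀ a, q a = 0 → p a = 0) :
    3 * ∑ a, (p a - q a) ^ 2 / (2 * p a + 4 * q a) ≤ relEntropy p q := by
  have hsum : ∑ a, (p a - q a) = 0 := by rw [sum_sub_distrib, hp.2, hq.2, sub_self]
  calc 3 * ∑ a, (p a - q a) ^ 2 / (2 * p a + 4 * q a)
      = ∑ a, (p a - q a + 3 * (p a - q a) ^ 2 / (2 * p a + 4 * q a)) := by
        rw [sum_add_distrib, hsum, zero_add, mul_sum]
        simp only [mul_div_assoc]
    _ ≤ relEntropy p q :=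
        sum_le_sum fun a _ => sub_add_three_mul_sq_div_le (hp.1 a) (hq.1 a) (hpq a)

theorem dTV_le_sqrt_relEntropy {α : Type*} [Fintype α] {p q : α → ℝ}
    (hp : IsDist p) (hq : IsDist q) (hpq : ∀ a, q a = 0 → p a = 0) :
    dTV p q ≤ Real.sqrt (relEntropy p q / 2) := by
  set d := fun a => 2 * p a + 4 * q a
  have hd : ∀ a, 0 ≤ d a := fun a => by have := hp.1 a; have := hq.1 a; positivity
  have hsum_d : ∑ a, d a = 6 := by
    simp only [d, sum_add_distrib, ← mul_sum, hp.2, hq.2]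
    norm_num
  have hcs : (∑ a, |p a - q a|) ^ 2 ≤ (∑ a, (p a - q a) ^ 2 / d a) * ∑ a, d a := by
    refine sum_sq_le_sum_mul_sum_of_sq_le_mul _ (fun a _ => div_nonneg (sq_nonneg _) (hd a))
      (fun a _ => hd a) fun a _ => ?_
    rcases (hd a).eq_or_lt with h | h
    · have := hp.1 a; have := hq.1 a
      have hpa : p a = 0 := by simp only [d] at h; linarith
      have hqa : q a = 0 := by simp only [d] at h; linarith
      simp [hpa, hqa]
    · rw [sq_abs, div_mul_cancel₀ _ h.ne']
  have hkl := three_mul_sum_sq_div_le_relEntropy hp hq hpq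
  refine Real.le_sqrt_of_sq_le ?_
  unfold dTV
  nlinarith

theorem dTV_le_sqrt_mutualInfo {α β : Type*} [Fintype α] [Fintype β] {j : α × β → ℝ}
    (hj : IsDist j) :
    dTV j (fun p => (∑ b, j (p.1, b)) * (∑ a, j (a, p.2))) ≤ Real.sqrt (mutualInfo j / 2) := by
  have hfst : ∀ a, 0 ≤ ∑ b, j (a, b) := fun a => sum_nonneg fun b _ => hj.1 _
  have hsnd : ∀ b, 0 ≤ ∑ a, j (a, b) := fun b => sum_nonneg fun a _ => hj.1 _
  have hprod : IsDist fun p : α × β => (∑ b, j (p.1, b)) * (∑ a, j (a, p.2)) := by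
    refine ⟨fun p => mul_nonneg (hfst _) (hsnd _), ?_⟩
    have hj' : ∑ a, ∑ b, j (a, b) = 1 := by rw [← Fintype.sum_prod_type, hj.2]
    simp only [Fintype.sum_prod_type, ← sum_mul_sum, hj']
    rw [sum_comm, hj', one_mul]
  rw [mutualInfo_eq_relEntropy]
  refine dTV_le_sqrt_relEntropy hj hprod fun p hp => ?_
  rcases mul_eq_zero.1 hp with h | h
  · exact le_antisymm ((single_le_sum (fun b _ => hj.1 (p.1, b)) (mem_univ p.2)).trans h.le)
      (hj.1 p)
  · exact le_antisymm ((single_le_sum (fun a _ => hj.1 (a, p.2)) (mem_univ p.1)).trans h.le)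
      (hj.1 p)

section Kernel

variable {α β : Type*} [Fintype α] [Fintype β]

lemma IsDist.sum_mul {μ : α → ℝ} {K : α → β → ℝ} (hμ : IsDist μ) (hK : ∀ a, IsDist (K a)) :
    IsDist fun b => ∑ a, μ a * K a b := by
  refine ⟨fun b => sum_nonneg fun a _ => mul_nonneg (hμ.1 a) ((hK a).1 b), ?_⟩
  rw [sum_comm]
  simp only [← mul_sum, (hK _).2, mul_one, hμ.2]

lemma sum_sum_mul_mul_assoc (f : α → ℝ) (g : α → β → ℝ) (h : β → ℝ) :
    ∑ b, (∑ a, f a * g a b) * h b = ∑ a, f a * ∑ b, g a b * h b := by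
  simp only [sum_mul, mul_sum, mul_assoc]
  exact sum_comm

lemma sum_mul_sum_mul_comm (f : α → ℝ) (g : α → β → ℝ) (h : β → ℝ) :
    ∑ b, h b * ∑ a, f a * g a b = ∑ a, f a * ∑ b, h b * g a b := by
  simp only [mul_sum, mul_left_comm (h _)]
  exact sum_comm

lemma dTV_sum_mul_le (μ ν : α → ℝ) {K : α → β → ℝ} (hK : ∀ a, IsDist (K a)) :
    dTV (fun b => ∑ a, μ a * K a b) (fun b => ∑ a, ν a * K a b) ≤ dTV μ ν := by
  unfold dTV
  gcongr
  calc ∑ b, |∑ a, μ a * K a b - ∑ a, ν a * K a b|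
      ≤ ∑ b, ∑ a, |μ a - ν a| * K a b := by
        gcongr with b
        rw [← sum_sub_distrib]
        refine (abs_sum_le_sum_abs _ _).trans_eq (sum_congr rfl fun a _ => ?_)
        rw [← sub_mul, abs_mul, abs_of_nonneg ((hK a).1 b)]
    _ = ∑ a, |μ a - ν a| := by
        rw [sum_comm]
        simp only [← mul_sum, (hK _).2, mul_one]

lemma dTV_triangle (p q r : α → ℝ) : dTV p r ≤ dTV p q + dTV q r := by
  unfold dTV
  rw [← mul_add, ← sum_add_distrib]
  gcongr with a
  exact abs_sub_le _ _ _

lemma dTV_le_sum_range (f : ℕ → α → ℝ) (n : ℕ) :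
    dTV (f 0) (f n) ≤ ∑ t ∈ range n, dTV (f t) (f (t + 1)) := by
  induction n with
  | zero => simp [dTV]
  | succ n ih =>
    rw [sum_range_succ]
    exact (dTV_triangle _ (f n) _).trans (by gcongr)

lemma dTV_const_mul_sum_le {ι : Type*} [Fintype ι] {c : ℝ} (hc : 0 ≤ c) (f g : ι → α → ℝ) :
    dTV (fun a => c * ∑ i, f i a) (fun a => c * ∑ i, g i a) ≤ c * ∑ i, dTV (f i) (g i) := by
  unfold dTV
  simp only [← mul_sub, ← sum_sub_distrib, abs_mul, abs_of_nonneg hc, ← mul_sum]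
  rw [mul_left_comm]
  gcongr
  exact (sum_le_sum fun a _ => abs_sum_le_sum_abs _ _).trans_eq sum_comm

end Kernel

lemma IsDP.sum_mul {X R Z : Type*} [Fintype X] [Fintype R] [Fintype Z] {ε δ : ℝ}
    {w : Z → ℝ} (hw : IsDist w) {M : Z → X → R → ℝ} (hM : ∀ z, IsDP (M z) ε δ) :
    IsDP (fun x r => ∑ z, w z * M z x r) ε δ := by
  intro x x' C
  rw [sum_comm]
  calc ∑ z, ∑ r ∈ C, w z * M z x r
      ≤ ∑ z, w z * (Real.exp ε * ∑ r ∈ C, M z x' r + δ) := by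
        gcongr with z
        rw [← mul_sum]
        exact mul_le_mul_of_nonneg_left (hM z x x' C) (hw.1 z)
    _ = Real.exp ε * ∑ r ∈ C, ∑ z, w z * M z x' r + δ := by
        simp only [mul_add, sum_add_distrib, ← Finset.sum_mul, hw.2, one_mul, mul_sum]
        rw [sum_comm]
        congr 1
        exact sum_congr rfl fun _ _ => sum_congr rfl fun _ _ => by ring

section Online

variable {X S : Type*} [Fintype X] [Fintype S] {M1 : X → S → ℝ} {Mst : ℕ → S → X → S → ℝ}

def dirac [DecidableEq X] (x : X) : X → ℝ := fun x' => if x' = x then 1 else 0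

lemma sum_dirac_mul [DecidableEq X] (x : X) (f : X → ℝ) : ∑ x', dirac x x' * f x' = f x := by
  simp [dirac]

lemma isDist_dirac [DecidableEq X] (x : X) : IsDist (dirac x) :=
  ⟨fun x' => by unfold dirac; split_ifs <;> norm_num, by simp [dirac]⟩

lemma stateDist_congr {q q' : ℕ → X → ℝ} {t : ℕ} (h : ∀ i ≤ t, q i = q' i) :
    stateDist M1 Mst q t = stateDist M1 Mst q' t := by
  induction t with
  | zero => simp only [stateDist, h 0 le_rfl]
  | succ t ih =>
    simp only [stateDist, ih fun i hi => h i (hi.trans t.le_succ), h (t + 1) le_rfl]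

lemma isDist_stateDist (hM1 : ∀ x, IsDist (M1 x)) (hMst : ∀ i s x, IsDist (Mst i s x))
    {q : ℕ → X → ℝ} (hq : ∀ i, IsDist (q i)) (t : ℕ) : IsDist (stateDist M1 Mst q t) := by
  induction t with
  | zero => exact (hq 0).sum_mul hM1
  | succ t ih => exact ih.sum_mul fun s' => (hq _).sum_mul fun x => hMst _ s' x

lemma stateDist_eq_sum_update [DecidableEq X] (q : ℕ → X → ℝ) {i t : ℕ} (hit : i ≤ t)
    (s : S) :
    stateDist M1 Mst q t s =
      ∑ x, q i x * stateDist M1 Mst (Function.update q i (dirac x)) t s := by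
  induction t generalizing s with
  | zero =>
    obtain rfl := Nat.le_zero.1 hit
    simp only [stateDist, Function.update_self, sum_dirac_mul]
  | succ t ih =>
    rcases hit.lt_or_eq with hit | rfl
    · simp only [stateDist, Function.update_of_ne (show t + 1 ≠ i by omega),
        ih (Nat.lt_succ_iff.1 hit)]
      exact sum_sum_mul_mul_assoc _ _ _
    · have hprev : ∀ x, stateDist M1 Mst (Function.update q (t + 1) (dirac x)) t =
          stateDist M1 Mst q t :=
        fun x => stateDist_congr fun i hi => Function.update_of_ne (by omega) _ _
      simp only [stateDist, hprev, Function.update_self, sum_dirac_mul]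
      exact sum_mul_sum_mul_comm _ _ _

lemma stateDist_dirac [DecidableEq X] (y : ℕ → X) (t : ℕ) :
    stateDist M1 Mst (fun i => dirac (y i)) t = detState M1 Mst y t := by
  induction t with
  | zero => funext s; exact sum_dirac_mul (y 0) (M1 · s)
  | succ t ih => funext s; simp only [stateDist, detState, ih, sum_dirac_mul]

noncomputable def stateMechanism [DecidableEq X] (M1 : X → S → ℝ) (Mst : ℕ → S → X → S → ℝ)
    (q : ℕ → X → ℝ) (t : ℕ) : X → S → ℝ :=
  fun x => stateDist M1 Mst (Function.update q t (dirac x)) t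

lemma stateMechanism_congr [DecidableEq X] {q q' : ℕ → X → ℝ} {t : ℕ}
    (h : ∀ i < t, q i = q' i) : stateMechanism M1 Mst q t = stateMechanism M1 Mst q' t := by
  funext x
  refine stateDist_congr fun i hi => ?_
  rcases hi.lt_or_eq with hi | rfl
  · rw [Function.update_of_ne hi.ne, Function.update_of_ne hi.ne, h i hi]
  · rw [Function.update_self, Function.update_self]

lemma isDist_stateMechanism [DecidableEq X] (hM1 : ∀ x, IsDist (M1 x))
    (hMst : ∀ i s x, IsDist (Mst i s x)) {q : ℕ → X → ℝ} (hq : ∀ i, IsDist (q i)) (t : ℕ)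
    (x : X) : IsDist (stateMechanism M1 Mst q t x) := by
  refine isDist_stateDist hM1 hMst (fun i => ?_) t
  rw [Function.update_apply]
  split_ifs
  exacts [isDist_dirac x, hq i]

lemma dTV_stateDist_le (hMst : ∀ i s x, IsDist (Mst i s x)) {q q' : ℕ → X → ℝ} {t m : ℕ}
    (hq : ∀ i, t < i → IsDist (q i)) (hqq' : ∀ i, t < i → q i = q' i) (htm : t ≤ m) :
    dTV (stateDist M1 Mst q m) (stateDist M1 Mst q' m) ≤
      dTV (stateDist M1 Mst q t) (stateDist M1 Mst q' t) := by
  induction m, htm using Nat.le_induction with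
  | base => exact le_rfl
  | succ m htm ih =>
    refine le_trans ?_ ih
    simp only [stateDist, hqq' (m + 1) (by omega)]
    exact dTV_sum_mul_le _ _ fun s' =>
      hqq' (m + 1) (by omega) ▸ (hq (m + 1) (by omega)).sum_mul fun x => hMst _ s' x

end Online

section PanPrivacy

variable {X S O : Type} [Fintype S] [Fintype O] [DecidableEq S]
  {M1 : X → S → ℝ} {Mst : ℕ → S → X → S → ℝ} {Mout : S → O → ℝ}

lemma isDist_fwd (hMst : ∀ i s x, IsDist (Mst i s x)) (x : ℕ → X) (t : ℕ) (s₀ : S) (j : ℕ) :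
    IsDist (fwd Mst x t s₀ j) := by
  induction j with
  | zero => exact isDist_dirac s₀
  | succ j ih => exact ih.sum_mul fun s' => hMst _ s' _

lemma sum_view_eq_detState (hMst : ∀ i s x, IsDist (Mst i s x)) (hMout : ∀ s, IsDist (Mout s))
    (n : ℕ) (x : ℕ → X) (t : ℕ) (s : S) :
    ∑ o, view M1 Mst Mout n x t (s, o) = detState M1 Mst x t s := by
  simp only [view, ← mul_sum, ((isDist_fwd hMst x t s (n - 1 - t)).sum_mul hMout).2, mul_one]

lemma PanPrivate.isDP_detState_update [Fintype X] {n : ℕ} {ε δ : ℝ}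
    (hpan : PanPrivate M1 Mst Mout n ε δ)
    (hMst : ∀ i s x, IsDist (Mst i s x)) (hMout : ∀ s, IsDist (Mout s)) {t : ℕ} (ht : t < n)
    (y : ℕ → X) : IsDP (fun x => detState M1 Mst (Function.update y t x) t) ε δ := by
  intro x x' C
  have h := hpan t ht (Function.update y t x) (Function.update y t x')
    ⟨t, fun i hi => by simp only [Function.update_of_ne hi]⟩ (C ×ˢ univ)
  simpa only [sum_product, sum_view_eq_detState hMst hMout] using h

theorem PanPrivate.isDP_stateMechanism [Fintype X] [DecidableEq X] {n : ℕ} {ε δ : ℝ}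
    (hpan : PanPrivate M1 Mst Mout n ε δ) (hMst : ∀ i s x, IsDist (Mst i s x))
    (hMout : ∀ s, IsDist (Mout s)) {t : ℕ} (ht : t < n) {q : ℕ → X → ℝ}
    (hq : ∀ i < t, IsDist (q i)) : IsDP (stateMechanism M1 Mst q t) ε δ := by
  -- Starting from deterministic streams, mix in the inputs before `t` one at a time.
  have hmixed : ∀ k ≤ t, ∀ y : ℕ → X,
      IsDP (stateMechanism M1 Mst (fun i => if i < k then q i else dirac (y i)) t) ε δ := by
    intro k hk
    induction k with
    | zero =>
      intro y
      have hdet : stateMechanism M1 Mst (fun i => if i < 0 then q i else dirac (y i)) t =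
          fun x => detState M1 Mst (Function.update y t x) t := by
        funext x
        rw [stateMechanism, ← stateDist_dirac]
        congr 1
        funext i
        simp only [Nat.not_lt_zero, if_false, Function.update_apply]
        split_ifs <;> rfl
      rw [hdet]
      exact hpan.isDP_detState_update hMst hMout ht y
    | succ k ih =>
      intro y
      have hsplit : stateMechanism M1 Mst (fun i => if i < k + 1 then q i else dirac (y i)) t =
          fun x s => ∑ z, q k z * stateMechanism M1 Mst
            (fun i => if i < k then q i else dirac (Function.update y k z i)) t x s := by
        funext x s
        rw [stateMechanism, stateDist_eq_sum_update _ (i := k) (by omega)]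
        refine sum_congr rfl fun z _ => ?_
        congr 1
        · simp [Function.update_of_ne (show k ≠ t by omega)]
        · unfold stateMechanism
          congr 1
          funext i
          simp only [Function.update_apply]
          split_ifs <;> first | rfl | omega
      rw [hsplit]
      exact IsDP.sum_mul (hq k (by omega)) fun z => ih (by omega) _
  intro x x' C
  rw [stateMechanism_congr (q' := fun i => if i < t then q i else dirac x)
    fun i hi => (if_pos hi).symm]
  exact hmixed t le_rfl (fun _ => x) x x' C

end PanPrivacy

def hybridInput {X : Type*} (U p : X → ℝ) (t : ℕ) : ℕ → X → ℝ := fun i => if i < t then U else p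

@[simp]
lemma hybridInput_zero {X : Type*} (U p : X → ℝ) : hybridInput U p 0 = fun _ => p := by
  funext i
  simp [hybridInput]

section Hybrid

variable {X S O V : Type*} [Fintype X] [Fintype S] [Fintype O] [Fintype V]

lemma isDist_uniform_mixture [Nonempty V] {a : V → S → ℝ} (ha : ∀ v, IsDist (a v)) :
    IsDist fun s => (1 / (Fintype.card V : ℝ)) * ∑ v, a v s := by
  have hunif : IsDist fun _ : V => 1 / (Fintype.card V : ℝ) :=
    ⟨fun _ => by positivity, by simp⟩
  simpa only [mul_sum] using hunif.sum_mul ha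

theorem uniform_mixture_dTV_le_sqrt_mutualInfo [Nonempty V] {a : V → S → ℝ}
    (ha : ∀ v, IsDist (a v)) :
    (1 / (Fintype.card V : ℝ)) *
        ∑ v, dTV (a v) (fun s => ∑ v', (1 / (Fintype.card V : ℝ)) * a v' s) ≤
      Real.sqrt (mutualInfo (fun p : S × V => (1 / (Fintype.card V : ℝ)) * a p.2 p.1) / 2) := by
  set w := 1 / (Fintype.card V : ℝ)
  have hw : 0 ≤ w := by positivity
  have hcol : ∀ v, ∑ s, w * a v s = w := fun v => by rw [← mul_sum, (ha v).2, mul_one]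
  have hjoint : IsDist fun p : S × V => w * a p.2 p.1 := by
    refine ⟨fun p => mul_nonneg hw ((ha _).1 _), ?_⟩
    rw [Fintype.sum_prod_type, sum_comm]
    simp only [hcol, sum_const, card_univ, nsmul_eq_mul, w]
    field_simp
  -- The left side is the distance between the joint law and the product of its marginals.
  refine le_of_eq_of_le ?_ (dTV_le_sqrt_mutualInfo hjoint)
  have hterm : ∀ v s, |w * a v s - (∑ b, w * a b s) * (∑ s', w * a v s')| =
      w * |a v s - ∑ b, w * a b s| := fun v s => by
    rw [hcol, ← abs_of_nonneg hw, ← abs_mul, abs_of_nonneg hw]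
    ring_nf
  rw [dTV, Fintype.sum_prod_type, sum_comm]
  simp only [hterm]
  simp only [dTV, mul_sum]
  exact sum_congr rfl fun _ _ => sum_congr rfl fun _ _ => by ring

variable {M1 : X → S → ℝ} {Mst : ℕ → S → X → S → ℝ} {Mout : S → O → ℝ}

noncomputable def outDist (M1 : X → S → ℝ) (Mst : ℕ → S → X → S → ℝ) (Mout : S → O → ℝ)
    (q : ℕ → X → ℝ) (n : ℕ) : O → ℝ :=
  fun o => ∑ s, stateDist M1 Mst q (n - 1) s * Mout s o

lemma dTV_outDist_le (hMst : ∀ i s x, IsDist (Mst i s x)) (hMout : ∀ s, IsDist (Mout s))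
    {q q' : ℕ → X → ℝ} {n t : ℕ} (ht : t ≤ n - 1) (hq : ∀ i, t < i → IsDist (q i))
    (hqq' : ∀ i, t < i → q i = q' i) :
    dTV (outDist M1 Mst Mout q n) (outDist M1 Mst Mout q' n) ≤
      dTV (stateDist M1 Mst q t) (stateDist M1 Mst q' t) :=
  (dTV_sum_mul_le _ _ hMout).trans (dTV_stateDist_le hMst hq hqq' ht)

noncomputable def hybridOut (M1 : X → S → ℝ) (Mst : ℕ → S → X → S → ℝ) (Mout : S → O → ℝ)
    (P : V → X → ℝ) (U : X → ℝ) (n t : ℕ) : O → ℝ :=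
  fun o => (1 / (Fintype.card V : ℝ)) * ∑ v, outDist M1 Mst Mout (hybridInput U (P v) t) n o

lemma stateDist_hybridInput [DecidableEq X] (U p : X → ℝ) (t : ℕ) (s : S) :
    stateDist M1 Mst (hybridInput U p t) t s =
      ∑ x, p x * stateMechanism M1 Mst (fun _ => U) t x s := by
  rw [stateDist_eq_sum_update _ le_rfl, ← stateMechanism_congr (q := hybridInput U p t)
    fun i hi => if_pos hi]
  simp only [hybridInput, lt_irrefl, if_false, stateMechanism]

lemma dTV_hybridOut_succ_le [DecidableEq X] (hMst : ∀ i s x, IsDist (Mst i s x))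
    (hMout : ∀ s, IsDist (Mout s)) {P : V → X → ℝ} (hP : ∀ v, IsDist (P v)) {U : X → ℝ}
    (hU : ∀ x, U x = (1 / (Fintype.card V : ℝ)) * ∑ v, P v x) {n t : ℕ} (ht : t < n) :
    dTV (hybridOut M1 Mst Mout P U n t) (hybridOut M1 Mst Mout P U n (t + 1)) ≤
      (1 / (Fintype.card V : ℝ)) * ∑ v,
        dTV (fun s => ∑ x, P v x * stateMechanism M1 Mst (fun _ => U) t x s)
          (fun s => ∑ v', (1 / (Fintype.card V : ℝ)) *
            ∑ x, P v' x * stateMechanism M1 Mst (fun _ => U) t x s) := by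
  refine (dTV_const_mul_sum_le (by positivity) _ _).trans ?_
  gcongr with v
  have hq : ∀ i, t < i → IsDist (hybridInput U (P v) t i) := fun i hi => by
    simpa [hybridInput, hi.not_gt] using hP v
  refine (dTV_outDist_le hMst hMout (by omega) hq fun i hi => ?_).trans_eq ?_
  · simp [hybridInput, hi.not_gt, show ¬ i < t + 1 by omega]
  · congr 1
    · funext s
      exact stateDist_hybridInput U (P v) t s
    · funext s
      rw [stateDist_congr (q' := hybridInput U U t) fun i hi => by
        simp [hybridInput, show i < t + 1 by omega]]
      simp only [stateDist_hybridInput, hU, mul_sum, sum_mul]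
      rw [sum_comm]
      exact sum_congr rfl fun _ _ => sum_congr rfl fun _ _ => by ring

end Hybrid

theorem stmt_17_general {X S O V : Type} [Fintype X] [Fintype S] [Fintype O] [Fintype V]
    [Nonempty V] [DecidableEq S]
    (n : ℕ) (hn : 1 ≤ n) (ε δ : ℝ)
    (M1 : X → S → ℝ) (hM1 : ∀ x, IsDist (M1 x))
    (Mst : ℕ → S → X → S → ℝ) (hMst : ∀ i s x, IsDist (Mst i s x))
    (Mout : S → O → ℝ) (hMout : ∀ s, IsDist (Mout s))
    (P : V → X → ℝ) (hP : ∀ v, IsDist (P v))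
    (U : X → ℝ) (hU : U = fun x => (1 / (Fintype.card V : ℝ)) * ∑ v, P v x)
    (I₀ : ℝ)
    (hDPinfo : ∀ (R : Type) [Fintype R], ∀ M : X → R → ℝ,
      (∀ x, IsDist (M x)) → IsDP M ε δ →
      mutualInfo (fun p : R × V =>
        (1 / (Fintype.card V : ℝ)) * ∑ x, P p.2 x * M x p.1) ≤ I₀)
    (hpan : PanPrivate M1 Mst Mout n ε δ) :
    dTV
      (fun o => (1 / (Fintype.card V : ℝ)) * ∑ v,
        ∑ s, stateDist M1 Mst (fun _ => P v) (n - 1) s * Mout s o)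
      (fun o => ∑ s, stateDist M1 Mst (fun _ => U) (n - 1) s * Mout s o) ≤
      n * Real.sqrt (I₀ / 2) := by
  classical
  have hUx : ∀ x, U x = (1 / (Fintype.card V : ℝ)) * ∑ v, P v x := fun x => by rw [hU]
  have hUd : IsDist U := hU ▸ isDist_uniform_mixture hP
  have hmech : ∀ t x, IsDist (stateMechanism M1 Mst (fun _ => U) t x) :=
    isDist_stateMechanism hM1 hMst fun _ => hUd
  have hstep : ∀ t < n, dTV (hybridOut M1 Mst Mout P U n t)
      (hybridOut M1 Mst Mout P U n (t + 1)) ≤ Real.sqrt (I₀ / 2) := fun t ht =>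
    (dTV_hybridOut_succ_le hMst hMout hP hUx ht).trans <|
      (uniform_mixture_dTV_le_sqrt_mutualInfo fun v => (hP v).sum_mul (hmech t)).trans <|
        Real.sqrt_le_sqrt <| div_le_div_of_nonneg_right (hDPinfo S _ (hmech t)
          (hpan.isDP_stateMechanism hMst hMout ht fun _ _ => hUd)) zero_le_two
  have hstart : hybridOut M1 Mst Mout P U n 0 = fun o => (1 / (Fintype.card V : ℝ)) * ∑ v,
      ∑ s, stateDist M1 Mst (fun _ => P v) (n - 1) s * Mout s o := by
    funext o
    simp [hybridOut, outDist]
  have hend : hybridOut M1 Mst Mout P U n n =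
      fun o => ∑ s, stateDist M1 Mst (fun _ => U) (n - 1) s * Mout s o := by
    funext o
    have hcongr : ∀ v, stateDist M1 Mst (hybridInput U (P v) n) (n - 1) =
        stateDist M1 Mst (fun _ => U) (n - 1) :=
      fun v => stateDist_congr fun i hi => if_pos (by omega)
    simp only [hybridOut, outDist, hcongr, sum_const, card_univ, nsmul_eq_mul, ← mul_assoc]
    field_simp
  calc _ = dTV (hybridOut M1 Mst Mout P U n 0) (hybridOut M1 Mst Mout P U n n) := by
        rw [hstart, hend]
    _ ≤ ∑ t ∈ range n, dTV (hybridOut M1 Mst Mout P U n t)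
          (hybridOut M1 Mst Mout P U n (t + 1)) := dTV_le_sum_range _ n
    _ ≤ n * Real.sqrt (I₀ / 2) := by
        simpa using sum_le_sum fun t ht => hstep t (mem_range.1 ht)

/-- If every `(ε,δ)`-DP single-input randomized map `M : X → R` satisfies
`I(M(P_V); V) ≤ I₀`, then every `(ε,δ)`-pan-private online algorithm `M` on streams
of length `n` satisfies `dTV(M(P_V^n), M(U^n)) ≤ n·√(I₀/2)`. -/
theorem stmt_17 {X S O V : Type} [Fintype X] [Fintype S] [Fintype O] [Fintype V]
    [Nonempty V] [DecidableEq X] [DecidableEq S]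
    (n : ℕ) (hn : 1 ≤ n) (ε δ : ℝ) (hε : 0 ≤ ε) (hδ : 0 ≤ δ)
    (M1 : X → S → ℝ) (hM1 : ∀ x, IsDist (M1 x))
    (Mst : ℕ → S → X → S → ℝ) (hMst : ∀ i s x, IsDist (Mst i s x))
    (Mout : S → O → ℝ) (hMout : ∀ s, IsDist (Mout s))
    (P : V → X → ℝ) (hP : ∀ v, IsDist (P v))
    (U : X → ℝ) (hU : U = fun x => (1 / (Fintype.card V : ℝ)) * ∑ v, P v x)
    (I₀ : ℝ) (hI₀ : 0 ≤ I₀)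
    (hDPinfo : ∀ (R : Type) [Fintype R], ∀ M : X → R → ℝ,
      (∀ x, IsDist (M x)) → IsDP M ε δ →
      mutualInfo (fun p : R × V =>
        (1 / (Fintype.card V : ℝ)) * ∑ x, P p.2 x * M x p.1) ≤ I₀)
    (hpan : PanPrivate M1 Mst Mout n ε δ) :
    dTV
      (fun o => (1 / (Fintype.card V : ℝ)) * ∑ v,
        ∑ s, stateDist M1 Mst (fun _ => P v) (n - 1) s * Mout s o)
      (fun o => ∑ s, stateDist M1 Mst (fun _ => U) (n - 1) s * Mout s o) ≤
      n * Real.sqrt (I₀ / 2) :=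
  stmt_17_general n hn ε δ M1 hM1 Mst hMst Mout hMout P hP U hU I₀ hDPinfo hpan
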